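/- Let $\pi < \beta < 2\pi$, let $v_0(r) = r^{\pi/\beta} - r^2$ on $(0,1)$, and let $v_\epsilon$ be as in the annular-sector example: $v_\epsilon(r) = \frac{\epsilon^{-\pi/\beta} - \epsilon^2}{\epsilon^{-\pi/\beta} - \epsilon^{\pi/\beta}} r^{\pi/\beta} + \frac{\epsilon^2 - \epsilon^{\pi/\beta}}{\epsilon^{-\pi/\beta} - \epsilon^{\pi/\beta}} r^{-\pi/\beta} - r^2$ on $(\epsilon, 1)$, extended by zero on $(0,\epsilon]$. Then there exists $A > 0$ such that $\left(\int_0^1 \left[(v_\epsilon' - v_0')^2 + \frac{\pi^2}{\beta^2 r^2}(v_\epsilon - v_0)^2\right] r\, dr\right)^{1/2} = A\,\epsilon^{\pi/\beta}(1 + o(1))$ as $\epsilon \to 0^+$. -/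

import Mathlib

open Set Filter MeasureTheory

noncomputable section

/-! With `μ = π/β`, on `(ε, 1)` the difference `v_ε - v₀` is `c (r^μ - r^{-μ})` with
`c = ε^{2μ} (1 - ε^{2-μ}) / (1 - ε^{2μ})`; the cross terms of its energy density cancel, leaving
`2μ²c² (r^{2μ-1} + r^{-2μ-1})`. On `(0, ε)` the difference is `-v₀`. Integrating both pieces, the
energy is `ε^{2μ}` times a function of `ε` tending to `μ + μ` as `ε → 0⁺` (this needs `μ < 2`), so
`A = √(2μ)`. -/

lemma Real.rpow_two_mul {x : ℝ} (hx : 0 ≤ x) (y : ℝ) : x ^ (2 * y) = (x ^ y) ^ 2 := by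
  rw [mul_comm]
  exact_mod_cast Real.rpow_mul_natCast hx y 2

namespace AnnularSector

variable {μ ε r : ℝ}

def energyDensity (μ : ℝ) (u w : ℝ → ℝ) (r : ℝ) : ℝ :=
  ((deriv u r - deriv w r) ^ 2 + μ ^ 2 / r ^ 2 * (u r - w r) ^ 2) * r

def sectorProfile (μ r : ℝ) : ℝ := r ^ μ - r ^ 2

def annularProfile (μ ε r : ℝ) : ℝ :=
  if r ≤ ε then 0 else
    ((ε ^ (-μ) - ε ^ 2) / (ε ^ (-μ) - ε ^ μ)) * r ^ μ
      + ((ε ^ 2 - ε ^ μ) / (ε ^ (-μ) - ε ^ μ)) * r ^ (-μ) - r ^ 2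

def correctionFactor (μ ε : ℝ) : ℝ := (1 - ε ^ (2 - μ)) / (1 - ε ^ (2 * μ))

def normalizedEnergy (μ ε : ℝ) : ℝ :=
  μ - 2 * μ * ε ^ (2 - μ) + (4 + μ ^ 2) / 4 * ε ^ (4 - 2 * μ)
    + μ * correctionFactor μ ε ^ 2 * (1 - ε ^ (4 * μ))

lemma annularProfile_of_le (h : r ≤ ε) : annularProfile μ ε r = 0 := if_pos h

lemma annularProfile_of_lt (hμ : 0 < μ) (hε0 : 0 < ε) (hε1 : ε < 1) (h : ε < r) :
    annularProfile μ ε r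
      = sectorProfile μ r + ε ^ (2 * μ) * correctionFactor μ ε * (r ^ μ - r ^ (-μ)) := by
  have hx : 0 < ε ^ μ := Real.rpow_pos_of_pos hε0 μ
  have hx1 : ε ^ μ < 1 := Real.rpow_lt_one hε0.le hε1 hμ
  have hd : 1 - (ε ^ μ) ^ 2 ≠ 0 := by nlinarith
  have hd' : (ε ^ μ)⁻¹ - ε ^ μ ≠ 0 := by
    rw [show (ε ^ μ)⁻¹ - ε ^ μ = (1 - (ε ^ μ) ^ 2) / ε ^ μ by field_simp]
    exact div_ne_zero hd hx.ne'
  rw [annularProfile, if_neg h.not_ge, sectorProfile, correctionFactor, Real.rpow_neg hε0.le,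
    Real.rpow_two_mul hε0.le, Real.rpow_sub hε0, Real.rpow_two]
  field_simp
  ring

lemma hasDerivAt_sectorProfile (hr : 0 < r) :
    HasDerivAt (sectorProfile μ) (μ * r ^ (μ - 1) - 2 * r) r := by
  refine ((Real.hasDerivAt_rpow_const (Or.inl hr.ne')).sub (hasDerivAt_pow 2 r)).congr_deriv ?_
  norm_num

lemma hasDerivAt_rpow_sub_rpow_neg (hr : 0 < r) :
    HasDerivAt (fun x => x ^ μ - x ^ (-μ)) (μ * (r ^ (μ - 1) + r ^ (-μ - 1))) r := by
  refine ((Real.hasDerivAt_rpow_const (Or.inl hr.ne')).sub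
    (Real.hasDerivAt_rpow_const (Or.inl hr.ne'))).congr_deriv ?_
  ring

lemma energyDensity_of_eventuallyEq_zero {u : ℝ → ℝ} (hr : 0 < r)
    (hu : u =ᶠ[nhds r] fun _ => 0) :
    energyDensity μ u (sectorProfile μ) r
      = 2 * μ ^ 2 * r ^ (2 * μ - 1) - 2 * μ * (2 + μ) * r ^ (μ + 1) + (4 + μ ^ 2) * r ^ 3 := by
  rw [energyDensity, hu.deriv_eq, deriv_const, (hasDerivAt_sectorProfile hr).deriv, hu.eq_of_nhds,
    sectorProfile, Real.rpow_sub_one hr.ne', Real.rpow_add_one hr.ne', Real.rpow_sub_one hr.ne',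
    Real.rpow_two_mul hr.le]
  field_simp
  ring

lemma energyDensity_of_eventuallyEq {u : ℝ → ℝ} (hr : 0 < r) (c : ℝ)
    (hu : u =ᶠ[nhds r] fun x => sectorProfile μ x + c * (x ^ μ - x ^ (-μ))) :
    energyDensity μ u (sectorProfile μ) r
      = 2 * μ ^ 2 * c ^ 2 * (r ^ (2 * μ - 1) + r ^ (-(2 * μ) - 1)) := by
  have hderiv : HasDerivAt (fun x => sectorProfile μ x + c * (x ^ μ - x ^ (-μ)))
      (μ * r ^ (μ - 1) - 2 * r + c * (μ * (r ^ (μ - 1) + r ^ (-μ - 1)))) r :=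
    (hasDerivAt_sectorProfile hr).add ((hasDerivAt_rpow_sub_rpow_neg hr).const_mul c)
  rw [energyDensity, hu.deriv_eq, hderiv.deriv, (hasDerivAt_sectorProfile hr).deriv, hu.eq_of_nhds,
    show -(2 * μ) - 1 = 2 * -μ - 1 by ring, Real.rpow_sub_one hr.ne', Real.rpow_sub_one hr.ne',
    Real.rpow_sub_one hr.ne', Real.rpow_sub_one hr.ne', Real.rpow_two_mul hr.le μ,
    Real.rpow_two_mul hr.le (-μ)]
  field_simp
  ring

lemma energyDensity_of_lt (hr : 0 < r) (h : r < ε) :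
    energyDensity μ (annularProfile μ ε) (sectorProfile μ) r
      = 2 * μ ^ 2 * r ^ (2 * μ - 1) - 2 * μ * (2 + μ) * r ^ (μ + 1) + (4 + μ ^ 2) * r ^ 3 :=
  energyDensity_of_eventuallyEq_zero hr <| by
    filter_upwards [Iio_mem_nhds h] with x hx using annularProfile_of_le hx.le

lemma energyDensity_of_gt (hμ : 0 < μ) (hε0 : 0 < ε) (hε1 : ε < 1) (h : ε < r) :
    energyDensity μ (annularProfile μ ε) (sectorProfile μ) r
      = 2 * μ ^ 2 * (ε ^ (2 * μ) * correctionFactor μ ε) ^ 2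
          * (r ^ (2 * μ - 1) + r ^ (-(2 * μ) - 1)) :=
  energyDensity_of_eventuallyEq (hε0.trans h) _ <| by
    filter_upwards [Ioi_mem_nhds h] with x hx using annularProfile_of_lt hμ hε0 hε1 hx

lemma intervalIntegrable_sectorEnergy (hμ : 0 < μ) (a b : ℝ) :
    IntervalIntegrable
      (fun r => 2 * μ ^ 2 * r ^ (2 * μ - 1) - 2 * μ * (2 + μ) * r ^ (μ + 1) + (4 + μ ^ 2) * r ^ 3)
      volume a b :=
  (((intervalIntegral.intervalIntegrable_rpow' (by linarith)).const_mul _).sub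
    ((intervalIntegral.intervalIntegrable_rpow' (by linarith)).const_mul _)).add
    ((intervalIntegral.intervalIntegrable_pow 3).const_mul _)

lemma integral_sectorEnergy (hμ : 0 < μ) (ε : ℝ) :
    ∫ r in 0..ε, (2 * μ ^ 2 * r ^ (2 * μ - 1) - 2 * μ * (2 + μ) * r ^ (μ + 1) + (4 + μ ^ 2) * r ^ 3)
      = μ * ε ^ (2 * μ) - 2 * μ * ε ^ (μ + 2) + (4 + μ ^ 2) / 4 * ε ^ 4 := by
  have h1 : IntervalIntegrable (fun r => r ^ (2 * μ - 1)) volume 0 ε :=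
    intervalIntegral.intervalIntegrable_rpow' (by linarith)
  have h2 : IntervalIntegrable (fun r => r ^ (μ + 1)) volume 0 ε :=
    intervalIntegral.intervalIntegrable_rpow' (by linarith)
  rw [intervalIntegral.integral_add ((h1.const_mul _).sub (h2.const_mul _))
      ((intervalIntegral.intervalIntegrable_pow 3).const_mul _),
    intervalIntegral.integral_sub (h1.const_mul _) (h2.const_mul _),
    intervalIntegral.integral_const_mul, intervalIntegral.integral_const_mul,
    intervalIntegral.integral_const_mul, integral_rpow (Or.inl (by linarith)),
    integral_rpow (Or.inl (by linarith)), integral_pow, sub_add_cancel, add_assoc,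
    one_add_one_eq_two, Real.zero_rpow (by positivity), Real.zero_rpow (by positivity)]
  field_simp
  ring

lemma intervalIntegrable_rpow_add_rpow_neg {a b : ℝ} (ha : 0 < a) (hb : 0 < b) :
    IntervalIntegrable (fun r => r ^ (2 * μ - 1) + r ^ (-(2 * μ) - 1)) volume a b := by
  have h0 : (0 : ℝ) ∉ uIcc a b := notMem_uIcc_of_lt ha hb
  exact (intervalIntegral.intervalIntegrable_rpow (Or.inr h0)).add
    (intervalIntegral.intervalIntegrable_rpow (Or.inr h0))

lemma integral_rpow_add_rpow_neg (hμ : μ ≠ 0) (hε : 0 < ε) :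
    ∫ r in ε..1, (r ^ (2 * μ - 1) + r ^ (-(2 * μ) - 1))
      = (ε ^ (-(2 * μ)) - ε ^ (2 * μ)) / (2 * μ) := by
  have h0 : (0 : ℝ) ∉ uIcc ε 1 := notMem_uIcc_of_lt hε one_pos
  rw [intervalIntegral.integral_add (intervalIntegral.intervalIntegrable_rpow (Or.inr h0))
      (intervalIntegral.intervalIntegrable_rpow (Or.inr h0)),
    integral_rpow (Or.inr ⟨by contrapose! hμ; linarith, h0⟩),
    integral_rpow (Or.inr ⟨by contrapose! hμ; linarith, h0⟩)]
  simp only [sub_add_cancel, Real.one_rpow]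
  field_simp
  ring

lemma integral_energyDensity (hμ : 0 < μ) (hε0 : 0 < ε) (hε1 : ε < 1) :
    ∫ r in Ioo 0 1, energyDensity μ (annularProfile μ ε) (sectorProfile μ) r
      = ε ^ (2 * μ) * normalizedEnergy μ ε := by
  have hinner : EqOn (energyDensity μ (annularProfile μ ε) (sectorProfile μ))
      (fun r => 2 * μ ^ 2 * r ^ (2 * μ - 1) - 2 * μ * (2 + μ) * r ^ (μ + 1) + (4 + μ ^ 2) * r ^ 3)
      (Ioo 0 ε) := fun r hr => energyDensity_of_lt hr.1 hr.2
  have houter : EqOn (energyDensity μ (annularProfile μ ε) (sectorProfile μ))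
      (fun r => 2 * μ ^ 2 * (ε ^ (2 * μ) * correctionFactor μ ε) ^ 2
        * (r ^ (2 * μ - 1) + r ^ (-(2 * μ) - 1))) (Ioo ε 1) :=
    fun r hr => energyDensity_of_gt hμ hε0 hε1 hr.1
  rw [← integral_Ioc_eq_integral_Ioo, ← intervalIntegral.integral_of_le zero_le_one,
    ← intervalIntegral.integral_add_adjacent_intervals
      ((intervalIntegrable_sectorEnergy hμ 0 ε).congr_uIoo (uIoo_of_le hε0.le ▸ hinner.symm))
      (((intervalIntegrable_rpow_add_rpow_neg hε0 one_pos).const_mul _).congr_uIoo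
        (uIoo_of_le hε1.le ▸ houter.symm)),
    intervalIntegral.integral_congr_Ioo_of_le hε0.le hinner,
    intervalIntegral.integral_congr_Ioo_of_le hε1.le houter, intervalIntegral.integral_const_mul,
    integral_sectorEnergy hμ, integral_rpow_add_rpow_neg hμ.ne' hε0,
    normalizedEnergy, Real.rpow_add hε0, Real.rpow_sub hε0, Real.rpow_sub hε0, Real.rpow_neg hε0.le,
    show 4 * μ = 2 * (2 * μ) by ring, Real.rpow_two_mul hε0.le (2 * μ), Real.rpow_two,
    Real.rpow_ofNat, Real.rpow_two_mul hε0.le μ]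
  have : ε ^ μ ≠ 0 := (Real.rpow_pos_of_pos hε0 μ).ne'
  field_simp

lemma tendsto_normalizedEnergy (hμ0 : 0 < μ) (hμ2 : μ < 2) :
    Tendsto (normalizedEnergy μ) (nhdsWithin 0 (Ioi 0)) (nhds (2 * μ)) := by
  have hcont : ContinuousAt (normalizedEnergy μ) 0 := by
    unfold normalizedEnergy correctionFactor
    fun_prop (disch := first | exact Or.inr (by linarith) | simp [Real.zero_rpow, hμ0.ne'])
  have hzero : normalizedEnergy μ 0 = 2 * μ := by
    simp [normalizedEnergy, correctionFactor, Real.zero_rpow, hμ0.ne', (by linarith : 2 - μ ≠ 0),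
      (by linarith : 4 - 2 * μ ≠ 0)]
    ring
  exact hzero ▸ hcont.tendsto.mono_left nhdsWithin_le_nhds

theorem tendsto_sqrt_integral_energyDensity_div (hμ0 : 0 < μ) (hμ2 : μ < 2) :
    Tendsto (fun ε => √(∫ r in Ioo 0 1, energyDensity μ (annularProfile μ ε) (sectorProfile μ) r)
      / ε ^ μ) (nhdsWithin 0 (Ioi 0)) (nhds √(2 * μ)) := by
  refine ((Real.continuous_sqrt.tendsto _).comp (tendsto_normalizedEnergy hμ0 hμ2)).congr' ?_
  filter_upwards [Ioo_mem_nhdsGT one_pos] with ε ⟨hε0, hε1⟩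
  have hpow : 0 < ε ^ μ := Real.rpow_pos_of_pos hε0 μ
  rw [Function.comp_apply, integral_energyDensity hμ0 hε0 hε1, Real.sqrt_mul (by positivity),
    Real.rpow_two_mul hε0.le, Real.sqrt_sq hpow.le, mul_div_cancel_left₀ _ hpow.ne']

end AnnularSector

theorem statement14_general (β : ℝ) (hβ1 : Real.pi < β) :
    let μ : ℝ := Real.pi / β
    let v0 : ℝ → ℝ := fun r => r ^ μ - r ^ 2
    let v : ℝ → ℝ → ℝ := fun ε r =>
      if r ≤ ε then 0 else
        ((ε ^ (-μ) - ε ^ 2) / (ε ^ (-μ) - ε ^ μ)) * r ^ μ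
          + ((ε ^ 2 - ε ^ μ) / (ε ^ (-μ) - ε ^ μ)) * r ^ (-μ) - r ^ 2
    ∃ A > (0:ℝ),
      Tendsto (fun ε =>
          Real.sqrt (∫ r in Ioo (0:ℝ) 1,
            ((deriv (v ε) r - deriv v0 r) ^ 2
              + (Real.pi ^ 2 / (β ^ 2 * r ^ 2)) * (v ε r - v0 r) ^ 2) * r)
          / ε ^ μ)
        (nhdsWithin 0 (Ioi 0)) (nhds A) := by
  intro μ v0 v
  have hβ : 0 < β := Real.pi_pos.trans hβ1
  have hμ0 : 0 < μ := div_pos Real.pi_pos hβ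
  have hμ2 : μ < 2 := by
    have : μ < 1 := (div_lt_one hβ).mpr hβ1
    linarith
  refine ⟨√(2 * μ), Real.sqrt_pos.mpr (by positivity), ?_⟩
  convert AnnularSector.tendsto_sqrt_integral_energyDensity_div hμ0 hμ2 using 6 with ε r
  rw [AnnularSector.energyDensity, div_pow, div_div]
  rfl

/-- With `v₀(r) = r^{π/β} - r²` and `v_ε` the annular-sector solution
(extended by zero on `(0, ε]`), the weighted `H¹` distance satisfies the asymptotics
`(∫₀¹ [(v_ε' - v₀')² + (π²/(β²r²))(v_ε - v₀)²] r dr)^{1/2} = A ε^{π/β}(1 + o(1))`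
as `ε → 0⁺`, for some constant `A > 0`. -/
theorem statement14 (β : ℝ) (hβ1 : Real.pi < β) (hβ2 : β < 2 * Real.pi) :
    let μ : ℝ := Real.pi / β
    let v0 : ℝ → ℝ := fun r => r ^ μ - r ^ 2
    let v : ℝ → ℝ → ℝ := fun ε r =>
      if r ≤ ε then 0 else
        ((ε ^ (-μ) - ε ^ 2) / (ε ^ (-μ) - ε ^ μ)) * r ^ μ
          + ((ε ^ 2 - ε ^ μ) / (ε ^ (-μ) - ε ^ μ)) * r ^ (-μ) - r ^ 2
    ∃ A > (0:ℝ),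
      Tendsto (fun ε =>
          Real.sqrt (∫ r in Ioo (0:ℝ) 1,
            ((deriv (v ε) r - deriv v0 r) ^ 2
              + (Real.pi ^ 2 / (β ^ 2 * r ^ 2)) * (v ε r - v0 r) ^ 2) * r)
          / ε ^ μ)
        (nhdsWithin 0 (Ioi 0)) (nhds A) :=
  statement14_general β hβ1
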